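/- Let d ≥ 2, p, q ∈ [0,1], and γ ≥ 1. For the Werner states ω^q and ω^p on ℂ^d ⊗ ℂ^d, the hockey-stick divergence satisfies E_γ(ω^q‖ω^p) = max{0, q − γp, (1−q) − γ(1−p)}. -/

import Mathlib

/-!
Write `a = q − γp` and `b = (1 − q) − γ(1 − p)`, so that `ω^q − γω^p = aΘ + bΘ⊥` and
`a + b = 1 − γ ≤ 0`. The states `Θ` and `Θ⊥` live on the ranges of the complementary projections
`(I ± F)/2`. A test `0 ≤ M ≤ I` sees each of them with a weight in `[0, 1]`, so its value is at
most `max 0 a + max 0 b`, and one of `0`, `(I + F)/2`, `(I − F)/2`, `I` attains this bound.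
Because `a + b ≤ 0`, at most one of `a`, `b` is positive and the bound equals `max 0 (max a b)`.
-/

noncomputable section
open Matrix ComplexOrder

/-- Bipartite complex matrices on ℂ^d ⊗ ℂ^d. -/
abbrev BMat (d : ℕ) := Matrix (Fin d × Fin d) (Fin d × Fin d) ℂ

/-- The swap operator `F = Σ_{i,j} |i⟩⟨j| ⊗ |j⟩⟨i|`. -/
def swapOp (d : ℕ) : BMat d :=
  fun p q => if p.1 = q.2 ∧ p.2 = q.1 then 1 else 0

/-- The symmetric Werner extreme state `Θ = (I + F)/(d(d+1))`. -/
def wΘ (d : ℕ) : BMat d := ((d : ℂ) * ((d : ℂ) + 1))⁻¹ • (1 + swapOp d)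

/-- The antisymmetric Werner extreme state `Θ⊥ = (I − F)/(d(d−1))`. -/
def wΘperp (d : ℕ) : BMat d := ((d : ℂ) * ((d : ℂ) - 1))⁻¹ • (1 - swapOp d)

/-- The Werner state `ω^p = pΘ + (1−p)Θ⊥`. -/
def werner (d : ℕ) (p : ℝ) : BMat d := (p : ℂ) • wΘ d + ((1 - p : ℝ) : ℂ) • wΘperp d

/-- Hockey-stick divergence (all measurements) for γ ≥ 1. -/
def Eg {d : ℕ} (γ : ℝ) (ρ σ : BMat d) : ℝ :=
  sSup {x : ℝ | ∃ M : BMat d, M.PosSemidef ∧ ((1 : BMat d) - M).PosSemidef ∧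
    x = ((M * (ρ - (γ : ℂ) • σ)).trace).re}

lemma mul_le_max_zero {a s : ℝ} (hs : s ∈ Set.Icc 0 1) : a * s ≤ max 0 a := by
  rcases le_total 0 a with ha | ha
  · exact (mul_le_of_le_one_right ha hs.2).trans (le_max_right _ _)
  · exact (mul_nonpos_of_nonpos_of_nonneg ha hs.1).trans (le_max_left _ _)

lemma max_zero_add_max_zero_of_add_nonpos {a b : ℝ} (h : a + b ≤ 0) :
    max 0 a + max 0 b = max 0 (max a b) := by
  grind

namespace Matrix

variable {n : Type*} [Fintype n] [DecidableEq n]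

open scoped MatrixOrder in
theorem PosSemidef.trace_mul_nonneg {𝕜 : Type*} [RCLike 𝕜] {A B : Matrix n n 𝕜}
    (hA : A.PosSemidef) (hB : B.PosSemidef) : 0 ≤ (A * B).trace := by
  classical
  obtain ⟨C, rfl⟩ := CStarAlgebra.nonneg_iff_eq_star_mul_self.mp hB.nonneg
  rw [star_eq_conjTranspose, ← mul_assoc, trace_mul_comm, ← mul_assoc]
  exact (hA.mul_mul_conjTranspose_same C).trace_nonneg

theorem re_trace_mul_mem_Icc {M ρ : Matrix n n ℂ} (hM : M.PosSemidef) (hM1 : (1 - M).PosSemidef)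
    (hρ : ρ.PosSemidef) (hρ1 : ρ.trace = 1) : (M * ρ).trace.re ∈ Set.Icc 0 1 := by
  have h1 := hM1.trace_mul_nonneg hρ
  rw [sub_mul, one_mul, trace_sub, hρ1] at h1
  exact ⟨(Complex.nonneg_iff.mp (hM.trace_mul_nonneg hρ)).1,
    by simpa using (Complex.nonneg_iff.mp h1).1⟩

theorem isStarProjection_half_one_add {F : Matrix n n ℂ} (hF : IsSelfAdjoint F)
    (hFF : F * F = 1) : IsStarProjection ((2⁻¹ : ℂ) • (1 + F)) := by
  refine ⟨?_, ?_⟩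
  · rw [IsIdempotentElem, smul_mul_smul, add_mul, mul_add, mul_add, hFF, one_mul, mul_one, one_mul]
    module
  · exact .smul (.of_nonneg (by positivity)) ((IsSelfAdjoint.one _).add hF)

open scoped MatrixOrder in
theorem posSemidef_one_add {F : Matrix n n ℂ} (hF : IsSelfAdjoint F) (hFF : F * F = 1) :
    (1 + F).PosSemidef := by
  have h := (isStarProjection_half_one_add hF hFF).nonneg.posSemidef.smul
    (by positivity : (0 : ℂ) ≤ 2)
  rwa [smul_smul, mul_inv_cancel₀ two_ne_zero, one_smul] at h

theorem posSemidef_one_sub {F : Matrix n n ℂ} (hF : IsSelfAdjoint F) (hFF : F * F = 1) :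
    (1 - F).PosSemidef := by
  simpa [sub_eq_add_neg] using posSemidef_one_add hF.neg (by rwa [neg_mul_neg])

open scoped MatrixOrder in
theorem isGreatest_re_trace_mul_smul_add_smul {P ρ σ : Matrix n n ℂ} (hP : IsStarProjection P)
    (hρ : ρ.PosSemidef) (hσ : σ.PosSemidef) (hρ1 : ρ.trace = 1) (hσ1 : σ.trace = 1)
    (hPρ : P * ρ = ρ) (hPσ : P * σ = 0) (a b : ℝ) :
    IsGreatest {x : ℝ | ∃ M : Matrix n n ℂ, M.PosSemidef ∧ (1 - M).PosSemidef ∧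
      x = (M * ((a : ℂ) • ρ + (b : ℂ) • σ)).trace.re} (max 0 a + max 0 b) := by
  have hvalue (M : Matrix n n ℂ) : (M * ((a : ℂ) • ρ + (b : ℂ) • σ)).trace.re =
      a * (M * ρ).trace.re + b * (M * σ).trace.re := by
    simp [mul_add, trace_add, trace_smul]
  have hproj {M : Matrix n n ℂ} (hM : IsStarProjection M) :
      a * (M * ρ).trace.re + b * (M * σ).trace.re ∈ {x : ℝ | ∃ M : Matrix n n ℂ, M.PosSemidef ∧
        (1 - M).PosSemidef ∧ x = (M * ((a : ℂ) • ρ + (b : ℂ) • σ)).trace.re} :=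
    ⟨M, hM.nonneg.posSemidef, hM.one_sub.nonneg.posSemidef, (hvalue M).symm⟩
  refine ⟨?_, ?_⟩
  · rcases le_total a 0 with ha | ha <;> rcases le_total b 0 with hb | hb
    · simpa [ha, hb] using hproj (.zero _)
    · simpa [ha, hb, sub_mul, hPρ, hPσ, hσ1] using hproj hP.one_sub
    · simpa [ha, hb, hPρ, hPσ, hρ1] using hproj hP
    · simpa [ha, hb, hρ1, hσ1] using hproj (.one _)
  · rintro x ⟨M, hM, hM1, rfl⟩
    rw [hvalue]
    exact add_le_add (mul_le_max_zero (re_trace_mul_mem_Icc hM hM1 hρ hρ1))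
      (mul_le_max_zero (re_trace_mul_mem_Icc hM hM1 hσ hσ1))

end Matrix

section Werner

variable (d : ℕ)

theorem swapOp_mul_self : swapOp d * swapOp d = 1 := by
  ext ⟨i, j⟩ ⟨k, l⟩
  simp [mul_apply, swapOp, one_apply, Fintype.sum_prod_type, ite_and, Finset.sum_ite_eq',
    Prod.ext_iff]

theorem isSelfAdjoint_swapOp : IsSelfAdjoint (swapOp d) := by
  ext ⟨i, j⟩ ⟨k, l⟩
  simp only [star_apply, swapOp, apply_ite star, star_one, star_zero]
  grind

theorem trace_swapOp : (swapOp d).trace = d := by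
  simp [trace, swapOp, Fintype.sum_prod_type, ite_and]

theorem posSemidef_wΘ : (wΘ d).PosSemidef := by
  refine (posSemidef_one_add (isSelfAdjoint_swapOp d) (swapOp_mul_self d)).smul ?_
  rw [show ((d : ℂ) * ((d : ℂ) + 1))⁻¹ = (((d * (d + 1) : ℝ))⁻¹ : ℝ) by push_cast; rfl]
  positivity

theorem posSemidef_wΘperp : (wΘperp d).PosSemidef := by
  refine (posSemidef_one_sub (isSelfAdjoint_swapOp d) (swapOp_mul_self d)).smul ?_
  rw [show ((d : ℂ) * ((d : ℂ) - 1))⁻¹ = (((d * (d - 1) : ℝ))⁻¹ : ℝ) by push_cast; rfl]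
  rcases d with _ | d
  · simp
  · push_cast
    rw [add_sub_cancel_right]
    positivity

theorem trace_wΘ (hd : d ≠ 0) : (wΘ d).trace = 1 := by
  have hd0 : (d : ℂ) ≠ 0 := by exact_mod_cast hd
  have hd1 : (d : ℂ) + 1 ≠ 0 := by exact_mod_cast d.succ_ne_zero
  rw [wΘ, trace_smul, trace_add, trace_one, trace_swapOp, Fintype.card_prod, Fintype.card_fin,
    smul_eq_mul, Nat.cast_mul, show (d : ℂ) * d + d = d * (d + 1) by ring]
  exact inv_mul_cancel₀ (mul_ne_zero hd0 hd1)

theorem trace_wΘperp (hd : 2 ≤ d) : (wΘperp d).trace = 1 := by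
  have hd0 : (d : ℂ) ≠ 0 := by exact_mod_cast (by omega : d ≠ 0)
  have hd1 : (d : ℂ) - 1 ≠ 0 := sub_ne_zero.mpr (by exact_mod_cast (by omega : d ≠ 1))
  rw [wΘperp, trace_smul, trace_sub, trace_one, trace_swapOp, Fintype.card_prod,
    Fintype.card_fin, smul_eq_mul, Nat.cast_mul, show (d : ℂ) * d - d = d * (d - 1) by ring]
  exact inv_mul_cancel₀ (mul_ne_zero hd0 hd1)

theorem half_one_add_swapOp_mul_wΘ : ((2⁻¹ : ℂ) • (1 + swapOp d)) * wΘ d = wΘ d := by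
  simp only [wΘ, smul_mul_smul, add_mul, mul_add, swapOp_mul_self, one_mul, mul_one]
  module

theorem half_one_add_swapOp_mul_wΘperp : ((2⁻¹ : ℂ) • (1 + swapOp d)) * wΘperp d = 0 := by
  simp only [wΘperp, smul_mul_smul, add_mul, mul_sub, swapOp_mul_self, one_mul, mul_one]
  module

theorem werner_sub_smul_werner (p q γ : ℝ) :
    werner d q - (γ : ℂ) • werner d p =
      ((q - γ * p : ℝ) : ℂ) • wΘ d + (((1 - q) - γ * (1 - p) : ℝ) : ℂ) • wΘperp d := by
  simp only [werner]
  push_cast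
  module

end Werner

theorem stmt_8_general (d : ℕ) (hd : 2 ≤ d) (p q : ℝ)
    (γ : ℝ) (hγ : 1 ≤ γ) :
    Eg γ (werner d q) (werner d p) =
      max 0 (max (q - γ * p) ((1 - q) - γ * (1 - p))) := by
  have hP := isStarProjection_half_one_add (isSelfAdjoint_swapOp d) (swapOp_mul_self d)
  rw [Eg, werner_sub_smul_werner, ← max_zero_add_max_zero_of_add_nonpos (by linarith)]
  exact (isGreatest_re_trace_mul_smul_add_smul hP (posSemidef_wΘ d) (posSemidef_wΘperp d)
    (trace_wΘ d (by omega)) (trace_wΘperp d hd) (half_one_add_swapOp_mul_wΘ d)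
    (half_one_add_swapOp_mul_wΘperp d) _ _).csSup_eq

/-- Hockey-stick divergence for Werner states. -/
theorem stmt_8 (d : ℕ) (hd : 2 ≤ d) (p q : ℝ)
    (hp : p ∈ Set.Icc (0 : ℝ) 1) (hq : q ∈ Set.Icc (0 : ℝ) 1)
    (γ : ℝ) (hγ : 1 ≤ γ) :
    Eg γ (werner d q) (werner d p) =
      max 0 (max (q - γ * p) ((1 - q) - γ * (1 - p))) :=
  stmt_8_general d hd p q γ hγ
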